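/- arXiv:1105.5132 — 8 statements merged into one kernel-verified Lean document; each statement's English description precedes it below -/
import Mathlib

section
/- Let (E_k)_{k=1}^n be a POVM, b_k ≥ 0, β = 1/(1 + Σ_k b_k), and suppose E_k^pw = β(b_k·𝟙 + E_k) is invertible for a fixed index k with b_k > 0. Then the recovery operators E^rc_{(k),ℓ} = β(b_k + δ_{k,ℓ}) (E_k^pw)^{-1/2} E_ℓ (E_k^pw)^{-1/2}, for ℓ = 1, ..., n, form a POVM. -/
open Matrix
open scoped ComplexOrder

noncomputable def Matrix.PosSemidef.sqrt {n : Type*} [Fintype n] [DecidableEq n]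
    {A : Matrix n n ℂ} (hA : A.PosSemidef) : Matrix n n ℂ :=
  (hA.1.eigenvectorUnitary : Matrix n n ℂ) * diagonal ((↑) ∘ (√·) ∘ hA.1.eigenvalues) *
    (star hA.1.eigenvectorUnitary : Matrix n n ℂ)

lemma Matrix.PosSemidef.posSemidef_sqrt {n : Type*} [Fintype n] [DecidableEq n]
    {A : Matrix n n ℂ} (hA : A.PosSemidef) : hA.sqrt.PosSemidef := by
  unfold Matrix.PosSemidef.sqrt
  rw [star_eq_conjTranspose]
  apply PosSemidef.mul_mul_conjTranspose_same
  rw [posSemidef_diagonal_iff]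
  intro i
  simp only [Function.comp_apply]
  exact_mod_cast Real.sqrt_nonneg _

lemma Matrix.PosSemidef.sqrt_mul_self {n : Type*} [Fintype n] [DecidableEq n]
    {A : Matrix n n ℂ} (hA : A.PosSemidef) : hA.sqrt * hA.sqrt = A := by
  unfold Matrix.PosSemidef.sqrt
  have hU := Unitary.coe_star_mul_self hA.1.eigenvectorUnitary
  conv_rhs => rw [hA.1.spectral_theorem, Unitary.conjStarAlgAut_apply]
  rw [show ∀ U D V : Matrix n n ℂ, U * D * V * (U * D * V) = U * (D * (V * U) * D) * V by
    intros; simp only [Matrix.mul_assoc], hU, Matrix.mul_one, diagonal_mul_diagonal]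
  congr 3
  funext i
  simp only [Function.comp_apply]
  rw [← Complex.ofReal_mul, Real.mul_self_sqrt (hA.eigenvalues_nonneg i)]
  rfl

lemma psd_smul_aux {d : ℕ} (M : Matrix (Fin d) (Fin d) ℂ) (hM : M.PosSemidef)
    (c : ℝ) (hc : 0 ≤ c) : ((c : ℂ) • M).PosSemidef := by
  constructor
  · rw [Matrix.IsHermitian, Matrix.conjTranspose_smul, hM.1.eq]
    simp [Complex.star_def, Complex.conj_ofReal]
  · exact (hM.smul (a := (c : ℂ)) (by exact_mod_cast hc)).2

/-- The recovery operators `E^rc_{(k),ℓ} = β (b_k + δ_{k,ℓ}) (E_k^pw)^{-1/2} E_ℓ (E_k^pw)^{-1/2}`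
for a fixed outcome `k` of the pseudo-weak implementation of a POVM `(E_k)` form a POVM. -/
theorem stmt_2 (d n : ℕ) (E : Fin n → Matrix (Fin d) (Fin d) ℂ)
    (hpos : ∀ j, (E j).PosSemidef) (hsum : ∑ j, E j = 1)
    (b : Fin n → ℝ) (hb : ∀ j, 0 ≤ b j)
    (β : ℝ) (hβ : β = 1 / (1 + ∑ j, b j))
    (k : Fin n) (hbk : 0 < b k)
    (Epw : Matrix (Fin d) (Fin d) ℂ)
    (hEpw : Epw = (β : ℂ) • ((b k : ℂ) • (1 : Matrix (Fin d) (Fin d) ℂ) + E k))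
    (hEpwPSD : Epw.PosSemidef)
    (hinv : IsUnit Epw)
    (W : Matrix (Fin d) (Fin d) ℂ) (hW : W = hEpwPSD.sqrt⁻¹)
    (Erc : Fin n → Matrix (Fin d) (Fin d) ℂ)
    (hErc : ∀ ℓ, Erc ℓ =
      ((β : ℂ) * ((b k : ℂ) + if k = ℓ then 1 else 0)) • (W * E ℓ * W)) :
    (∀ ℓ, (Erc ℓ).PosSemidef) ∧ ∑ ℓ, Erc ℓ = 1 := by
  have hβsum : 0 ≤ (1 : ℝ) + ∑ j, b j := by
    have := Finset.sum_nonneg (fun j (_ : j ∈ Finset.univ) => hb j)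
    linarith
  have hβ0 : 0 ≤ β := by rw [hβ]; positivity
  -- W is Hermitian
  have hWsqrtPSD := hEpwPSD.posSemidef_sqrt
  have hWH : Wᴴ = W := by
    rw [hW, Matrix.conjTranspose_nonsing_inv, hWsqrtPSD.1]
  -- sqrt is invertible
  have hdet : IsUnit hEpwPSD.sqrt.det := by
    have h1 : hEpwPSD.sqrt * hEpwPSD.sqrt = Epw := hEpwPSD.sqrt_mul_self
    have h2 : IsUnit Epw.det := (Matrix.isUnit_iff_isUnit_det _).mp hinv
    rw [← h1, Matrix.det_mul] at h2
    exact isUnit_of_mul_isUnit_left h2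
  constructor
  · intro ℓ
    rw [hErc ℓ]
    have hc : ((β : ℂ) * ((b k : ℂ) + if k = ℓ then 1 else 0))
        = ((β * (b k + if k = ℓ then 1 else 0) : ℝ) : ℂ) := by
      push_cast
      split <;> simp
    rw [hc]
    apply psd_smul_aux
    · have := (hpos ℓ).mul_mul_conjTranspose_same W
      rwa [hWH] at this
    · have : (0:ℝ) ≤ b k + if k = ℓ then 1 else 0 := by
        split <;> [linarith [hb k]; simpa using hb k]
      positivity
  · have hsum2 : ∑ ℓ, Erc ℓ = W * Epw * W := by
      have : ∑ ℓ, Erc ℓ =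
          W * (∑ ℓ, ((β : ℂ) * ((b k : ℂ) + if k = ℓ then 1 else 0)) • E ℓ) * W := by
        rw [Finset.mul_sum, Finset.sum_mul]
        refine Finset.sum_congr rfl fun ℓ _ => ?_
        rw [hErc ℓ, mul_smul_comm, smul_mul_assoc]
      rw [this, hEpw]
      congr 1
      congr 1
      have : ∀ ℓ, ((β : ℂ) * ((b k : ℂ) + if k = ℓ then 1 else 0)) • E ℓ
          = ((β : ℂ) * (b k : ℂ)) • E ℓ + (if k = ℓ then (β:ℂ) • E ℓ else 0) := by
        intro ℓ
        split <;> simp [mul_add, add_smul, mul_smul]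
      simp_rw [this, Finset.sum_add_distrib, ← Finset.smul_sum, hsum,
        Finset.sum_ite_eq, Finset.mem_univ, if_true]
      rw [smul_add, smul_smul]
    have hsq : hEpwPSD.sqrt * hEpwPSD.sqrt = Epw := hEpwPSD.sqrt_mul_self
    set S := hEpwPSD.sqrt with hS
    rw [hsum2, hW, ← hsq,
      show S⁻¹ * (S * S) * S⁻¹ = (S⁻¹ * S) * (S * S⁻¹) by noncomm_ring,
      Matrix.nonsing_inv_mul _ hdet, Matrix.mul_nonsing_inv _ hdet, one_mul]
end

section
/- The minimal mean failure probability deviation is dominated by the conditional entropy deviation: for any measurement 𝔈 with outcomes k on states ρ_μ with a priori probabilities p_μ, one has d_mf(𝔈) = 1 - Σ_k max_μ (p_μ tr(ρ_μ E_k)) ≤ H(S|K) = H(S,K) - H(K), where S is the random variable of the state index with joint distribution p(μ,k) = p_μ tr(ρ_μ E_k) and K the outcome variable. -/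
open Matrix
open scoped ComplexOrder

lemma trace_re_nonneg_of_psd {d : ℕ} {A B : Matrix (Fin d) (Fin d) ℂ}
    (hA : A.PosSemidef) (hB : B.PosSemidef) : 0 ≤ (A * B).trace.re := by
  obtain ⟨C, rfl⟩ : ∃ C : Matrix (Fin d) (Fin d) ℂ, A = Cᴴ * C := by
    open scoped MatrixOrder in exact CStarAlgebra.nonneg_iff_eq_star_mul_self.mp hA.nonneg
  obtain ⟨D, rfl⟩ : ∃ D : Matrix (Fin d) (Fin d) ℂ, B = Dᴴ * D := by
    open scoped MatrixOrder in exact CStarAlgebra.nonneg_iff_eq_star_mul_self.mp hB.nonneg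
  have h : (Cᴴ * C * (Dᴴ * D)).trace = ((C * Dᴴ)ᴴ * (C * Dᴴ)).trace := by
    rw [Matrix.conjTranspose_mul, Matrix.conjTranspose_conjTranspose]
    rw [show Cᴴ * C * (Dᴴ * D) = (Cᴴ * C * Dᴴ) * D by
        simp only [Matrix.mul_assoc],
      Matrix.trace_mul_comm]
    simp only [Matrix.mul_assoc]
  rw [h]
  set X := C * Dᴴ
  have : (Xᴴ * X).trace = ∑ i, ∑ j, star (X j i) * X j i := by
    simp [Matrix.trace, Matrix.diag, Matrix.mul_apply, Matrix.conjTranspose_apply]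
  rw [this]
  push_cast [Complex.re_sum]
  apply Finset.sum_nonneg; intro i _
  apply Finset.sum_nonneg; intro j _
  simp [Complex.mul_re]
  nlinarith [Complex.sq_norm (X j i)]

lemma key_ineq {N : ℕ} (hN : 0 < N) (f : Fin N → ℝ) (hf : ∀ μ, 0 ≤ f μ) :
    (∑ μ, f μ) - Finset.univ.sup' (Finset.univ_nonempty_iff.mpr ⟨⟨0, hN⟩⟩) f ≤
      (∑ μ, Real.negMulLog (f μ)) - Real.negMulLog (∑ μ, f μ) := by
  set ne : (Finset.univ : Finset (Fin N)).Nonempty := Finset.univ_nonempty_iff.mpr ⟨⟨0, hN⟩⟩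
  set q := ∑ μ, f μ with hq
  set m := Finset.univ.sup' ne f with hm
  have hmf : ∀ μ, f μ ≤ m := fun μ => Finset.le_sup' f (Finset.mem_univ μ)
  have hq0 : 0 ≤ q := Finset.sum_nonneg fun μ _ => hf μ
  rcases eq_or_lt_of_le hq0 with hq0' | hq0'
  · have hz : ∀ μ ∈ Finset.univ, f μ = 0 :=
      (Finset.sum_eq_zero_iff_of_nonneg (fun μ _ => hf μ)).mp hq0'.symm
    have hm0 : m = 0 := le_antisymm
      (Finset.sup'_le ne f fun μ _ => le_of_eq (hz μ (Finset.mem_univ μ)))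
      (le_trans (hf ⟨0, hN⟩) (hmf ⟨0, hN⟩))
    have : ∀ μ ∈ Finset.univ, Real.negMulLog (f μ) = 0 := fun μ h => by
      rw [hz μ h, Real.negMulLog_zero]
    rw [← hq0', hm0, Finset.sum_eq_zero this]
    simp [Real.negMulLog_zero, ← hq0']
  · -- q > 0
    have hm0 : 0 ≤ m := le_trans (hf ⟨0, hN⟩) (hmf ⟨0, hN⟩)
    have hrhs : (∑ μ, Real.negMulLog (f μ)) - Real.negMulLog q
        = ∑ μ, (Real.negMulLog (f μ) + f μ * Real.log q) := by
      rw [Finset.sum_add_distrib, ← Finset.sum_mul, ← hq]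
      unfold Real.negMulLog; ring
    have hlhs : q - m = ∑ μ, (f μ - f μ * (m / q)) := by
      rw [Finset.sum_sub_distrib, ← Finset.sum_mul, ← hq]
      field_simp
    rw [hrhs, hlhs]
    apply Finset.sum_le_sum
    intro μ _
    rcases eq_or_lt_of_le (hf μ) with h0 | h0
    · simp [← h0, Real.negMulLog_zero]
    · have hlog : 1 - f μ / q ≤ Real.log q - Real.log (f μ) := by
        have := Real.log_le_sub_one_of_pos (show 0 < f μ / q by positivity)
        rw [Real.log_div (ne_of_gt h0) (ne_of_gt hq0')] at this
        linarith
      have h1 : 1 - m / q ≤ 1 - f μ / q := by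
        have : f μ / q ≤ m / q := by gcongr; exact hmf μ
        linarith
      have := mul_le_mul_of_nonneg_left (le_trans h1 hlog) (le_of_lt h0)
      unfold Real.negMulLog
      nlinarith

lemma sum_P_eq_one {d N n : ℕ}
    (ρ : Fin N → Matrix (Fin d) (Fin d) ℂ) (hρtr : ∀ μ, (ρ μ).trace = 1)
    (p : Fin N → ℝ) (hpsum : ∑ μ, p μ = 1)
    (E : Fin n → Matrix (Fin d) (Fin d) ℂ) (hEsum : ∑ k, E k = 1)
    (P : Fin N → Fin n → ℝ)
    (hP : ∀ μ k, P μ k = p μ * ((ρ μ * E k).trace.re)) :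
    ∑ k, ∑ μ, P μ k = 1 := by
  rw [Finset.sum_comm]
  have h : ∀ μ, ∑ k, P μ k = p μ := by
    intro μ
    simp only [hP, ← Finset.mul_sum, ← Complex.re_sum, ← Matrix.trace_sum,
      ← Matrix.mul_sum, hEsum, Matrix.mul_one, hρtr μ]
    simp
  simp only [h, hpsum]

/-- The minimal mean failure probability is dominated by the conditional entropy:
`1 - ∑_k max_μ p_μ tr(ρ_μ E_k) ≤ H(S,K) - H(K)` (Shannon entropy in base `e`). -/
theorem stmt_5 (d N n : ℕ) (hN : 0 < N)
    (ρ : Fin N → Matrix (Fin d) (Fin d) ℂ)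
    (hρ : ∀ μ, (ρ μ).PosSemidef) (hρtr : ∀ μ, (ρ μ).trace = 1)
    (p : Fin N → ℝ) (hp : ∀ μ, 0 < p μ) (hpsum : ∑ μ, p μ = 1)
    (E : Fin n → Matrix (Fin d) (Fin d) ℂ)
    (hE : ∀ k, (E k).PosSemidef) (hEsum : ∑ k, E k = 1)
    (P : Fin N → Fin n → ℝ)
    (hP : ∀ μ k, P μ k = p μ * ((ρ μ * E k).trace.re)) :
    1 - ∑ k, (Finset.univ.sup' (Finset.univ_nonempty_iff.mpr ⟨⟨0, hN⟩⟩)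
        (fun μ => P μ k)) ≤
      (∑ μ, ∑ k, Real.negMulLog (P μ k)) -
        (∑ k, Real.negMulLog (∑ μ, P μ k)) := by
  have hPnn : ∀ μ k, 0 ≤ P μ k := fun μ k => by
    rw [hP]
    exact mul_nonneg (hp μ).le (trace_re_nonneg_of_psd (hρ μ) (hE k))
  have hsum1 : ∑ k, ∑ μ, P μ k = 1 := sum_P_eq_one ρ hρtr p hpsum E hEsum P hP
  rw [Finset.sum_comm (γ := Fin N) (α := Fin n), ← hsum1, ← Finset.sum_sub_distrib,
    ← Finset.sum_sub_distrib]
  exact Finset.sum_le_sum fun k _ => key_ineq hN (fun μ => P μ k) (fun μ => hPnn μ k)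
end

section
/- The mean failure probability satisfies the two-stage decomposition: if a measurement 𝔈 is performed in two stages, 𝔈(ρ) = ⊕_k 𝔈_k(A_k ρ A_k†) with Σ_k A_k† A_k = 𝟙, then d_mf(𝔈) = Σ_k p_{A_k} d_mf(𝔈_k | A_k), where p_{A_k} = Σ_μ tr(A_k γ_μ A_k†) and d_mf(𝔈_k | A_k) is the mean failure probability of 𝔈_k on the renormalized post-measurement states A_k γ_μ A_k†/p_{A_k} (terms with p_{A_k} = 0 contribute zero). Consequently d_mf(𝔈) ≥ min_k d_mf(𝔈_k | A_k). -/
open Matrix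
open scoped ComplexOrder

lemma psd_trace_re_eq {d : ℕ} (B : Matrix (Fin d) (Fin d) ℂ) :
    (Bᴴ * B).trace.re = ∑ j, ∑ i, ((B i j).re^2 + (B i j).im^2) := by
  simp [Matrix.trace, Matrix.diag, Matrix.mul_apply, Matrix.conjTranspose_apply,
    Complex.re_sum, Complex.mul_re]
  ring_nf

lemma psd_trace_re_nonneg {d : ℕ} {M : Matrix (Fin d) (Fin d) ℂ} (h : M.PosSemidef) :
    0 ≤ M.trace.re := by
  obtain ⟨B, rfl⟩ : ∃ B : Matrix (Fin d) (Fin d) ℂ, M = Bᴴ * B := by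
    open scoped MatrixOrder Matrix.Norms.L2Operator in
    exact CStarAlgebra.nonneg_iff_eq_star_mul_self.mp h.nonneg
  rw [psd_trace_re_eq]
  positivity

lemma psd_eq_zero_of_trace {d : ℕ} {M : Matrix (Fin d) (Fin d) ℂ} (h : M.PosSemidef)
    (ht : M.trace.re = 0) : M = 0 := by
  obtain ⟨B, rfl⟩ : ∃ B : Matrix (Fin d) (Fin d) ℂ, M = Bᴴ * B := by
    open scoped MatrixOrder Matrix.Norms.L2Operator in
    exact CStarAlgebra.nonneg_iff_eq_star_mul_self.mp h.nonneg
  rw [psd_trace_re_eq] at ht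
  suffices hB : B = 0 by simp [hB]
  ext i j
  have h1 := (Finset.sum_eq_zero_iff_of_nonneg
      (fun j' (_ : j' ∈ Finset.univ) => Finset.sum_nonneg
        fun i' _ => by positivity : ∀ j' ∈ (Finset.univ : Finset (Fin d)),
          (0:ℝ) ≤ ∑ i', ((B i' j').re^2 + (B i' j').im^2))).mp ht j (Finset.mem_univ j)
  have h2 := (Finset.sum_eq_zero_iff_of_nonneg
      (fun i' (_ : i' ∈ Finset.univ) => by positivity : ∀ i' ∈ (Finset.univ : Finset (Fin d)),
        (0:ℝ) ≤ (B i' j).re^2 + (B i' j).im^2)).mp h1 i (Finset.mem_univ i)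
  have hre : (B i j).re = 0 := by nlinarith [sq_nonneg (B i j).re, sq_nonneg (B i j).im]
  have him : (B i j).im = 0 := by nlinarith [sq_nonneg (B i j).re, sq_nonneg (B i j).im]
  simp [Complex.ext_iff, hre, him]

/-- Two-stage decomposition of the mean failure probability: if first the Kraus operators
`(A_k)` are applied and then, conditioned on outcome `k`, the POVM `(F_{k,j})_j` is measured,
then `d_mf(𝔈) = ∑_k p_{A_k} d_mf(𝔈_k | A_k)`; consequently `d_mf(𝔈) ≥ min_k d_mf(𝔈_k|A_k)`. -/
theorem stmt_6 (d N m n : ℕ) (hN : 0 < N) (hm : 0 < m)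
    (γ : Fin N → Matrix (Fin d) (Fin d) ℂ)
    (hγ : ∀ μ, (γ μ).PosSemidef) (hγtr : ∑ μ, (γ μ).trace = 1)
    (A : Fin m → Matrix (Fin d) (Fin d) ℂ)
    (hA : ∑ k, (A k)ᴴ * A k = 1)
    (F : Fin m → Fin n → Matrix (Fin d) (Fin d) ℂ)
    (hF : ∀ k j, (F k j).PosSemidef) (hFsum : ∀ k, ∑ j, F k j = 1)
    (hμne : (Finset.univ : Finset (Fin N)).Nonempty)
    (pA : Fin m → ℝ)
    (hpA : ∀ k, pA k = ∑ μ, (A k * γ μ * (A k)ᴴ).trace.re)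
    (dmfE : ℝ)
    (hdmfE : dmfE = 1 - ∑ k, ∑ j,
      Finset.univ.sup' hμne (fun μ => (γ μ * ((A k)ᴴ * F k j * A k)).trace.re))
    (dcond : Fin m → ℝ)
    (hdcond : ∀ k, dcond k =
      if pA k = 0 then 1 - Finset.univ.sup' hμne (fun μ => (γ μ).trace.re)
      else 1 - ∑ j,
        Finset.univ.sup' hμne
          (fun μ => (A k * γ μ * (A k)ᴴ * F k j).trace.re / pA k)) :
    dmfE = ∑ k, pA k * dcond k ∧
      Finset.univ.inf' (Finset.univ_nonempty_iff.mpr ⟨⟨0, hm⟩⟩) dcond ≤ dmfE := by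
  -- positivity of pA
  have hpsd : ∀ k μ, (A k * γ μ * (A k)ᴴ).PosSemidef :=
    fun k μ => (hγ μ).mul_mul_conjTranspose_same (A k)
  have hpA0 : ∀ k, 0 ≤ pA k := by
    intro k
    rw [hpA k]
    exact Finset.sum_nonneg fun μ _ => psd_trace_re_nonneg (hpsd k μ)
  -- trace cyclicity
  have hcyc : ∀ k j μ, (γ μ * ((A k)ᴴ * F k j * A k)).trace
      = (A k * γ μ * (A k)ᴴ * F k j).trace := by
    intro k j μ
    rw [← mul_assoc, Matrix.trace_mul_comm, ← mul_assoc, ← mul_assoc]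
  -- sum of pA is one
  have hsum1 : ∑ k, pA k = 1 := by
    have h1 : ∀ k μ, (A k * γ μ * (A k)ᴴ).trace = (((A k)ᴴ * A k) * γ μ).trace := by
      intro k μ
      rw [Matrix.trace_mul_comm, ← mul_assoc]
    have : ∑ k, pA k = (∑ μ, (∑ k, ((A k)ᴴ * A k)) * γ μ).trace.re := by
      simp only [hpA, h1, ← Complex.re_sum]
      rw [Finset.sum_comm]
      congr 1
      simp [Matrix.trace_sum, Finset.sum_mul]
    rw [this, hA]
    simp [hγtr]
  -- per-k identity
  have hkey : ∀ k, pA k * dcond k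
      = pA k - ∑ j, Finset.univ.sup' hμne
          (fun μ => (A k * γ μ * (A k)ᴴ * F k j).trace.re) := by
    intro k
    by_cases h0 : pA k = 0
    · have hz : ∀ μ, A k * γ μ * (A k)ᴴ = 0 := by
        intro μ
        refine psd_eq_zero_of_trace (hpsd k μ) ?_
        have := (Finset.sum_eq_zero_iff_of_nonneg
          (fun μ' (_ : μ' ∈ Finset.univ) => psd_trace_re_nonneg (hpsd k μ'))).mp
          ((hpA k).symm.trans h0) μ (Finset.mem_univ μ)
        exact this
      simp [h0, hz, Finset.sup'_const]
    · have hpos : 0 < pA k := lt_of_le_of_ne (hpA0 k) (Ne.symm h0)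
      rw [hdcond k, if_neg h0]
      have hsup : ∀ j, Finset.univ.sup' hμne
          (fun μ => (A k * γ μ * (A k)ᴴ * F k j).trace.re / pA k)
          = (Finset.univ.sup' hμne
              (fun μ => (A k * γ μ * (A k)ᴴ * F k j).trace.re)) / pA k := by
        intro j
        exact (Finset.comp_sup'_eq_sup'_comp hμne (fun x => x / pA k)
          (fun x y => (max_div_div_right (le_of_lt hpos) x y).symm)).symm
      simp only [hsup]
      rw [← Finset.sum_div]
      field_simp
  refine ⟨?_, ?_⟩
  · rw [hdmfE]
    simp only [hcyc, hkey, Finset.sum_sub_distrib, hsum1]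
  · have h2 : dmfE = ∑ k, pA k * dcond k := by
      rw [hdmfE]
      simp only [hcyc, hkey, Finset.sum_sub_distrib, hsum1]
    rw [h2]
    calc Finset.univ.inf' (Finset.univ_nonempty_iff.mpr ⟨⟨0, hm⟩⟩) dcond
        = ∑ k, pA k * Finset.univ.inf' (Finset.univ_nonempty_iff.mpr ⟨⟨0, hm⟩⟩) dcond := by
          rw [← Finset.sum_mul, hsum1, one_mul]
      _ ≤ ∑ k, pA k * dcond k := by
          refine Finset.sum_le_sum fun k _ => ?_
          exact mul_le_mul_of_nonneg_left (Finset.inf'_le _ (Finset.mem_univ k)) (hpA0 k)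
end

section
/- For the mean failure probability, measurements with more than N outcomes are never advantageous when discriminating N states: for any measurement 𝔈 with effects (E_k)_{k=1}^n on N weighted states γ_μ, there exists a measurement 𝔉 with at most N effects (each a sum of some of the E_k) such that d_mf(𝔉) = d_mf(𝔈), where d_mf(𝔈) = 1 - Σ_k max_μ tr(γ_μ E_k). -/
open Matrix
open scoped ComplexOrder

/-- For discriminating `N` states with respect to the mean failure probability, at most `N`
outcomes suffice: the effects of the original POVM can be grouped (each new effect being a sum
of some of the original ones) into a POVM with `N` effects achieving the same `d_mf`. -/
theorem stmt_8 (d N n : ℕ) (hN : 0 < N)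
    (γ : Fin N → Matrix (Fin d) (Fin d) ℂ)
    (hγ : ∀ μ, (γ μ).PosSemidef) (hγtr : ∑ μ, (γ μ).trace = 1)
    (E : Fin n → Matrix (Fin d) (Fin d) ℂ)
    (hE : ∀ k, (E k).PosSemidef) (hEsum : ∑ k, E k = 1)
    (hμne : (Finset.univ : Finset (Fin N)).Nonempty) :
    ∃ f : Fin n → Fin N,
      (∀ μ, (∑ k ∈ Finset.univ.filter (fun k => f k = μ), E k).PosSemidef) ∧
      (∑ μ, ∑ k ∈ Finset.univ.filter (fun k => f k = μ), E k) = 1 ∧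
      1 - ∑ μ, Finset.univ.sup' hμne
          (fun ν => ((γ ν) * ∑ k ∈ Finset.univ.filter (fun k => f k = μ), E k).trace.re) =
        1 - ∑ k, Finset.univ.sup' hμne (fun μ => (γ μ * E k).trace.re) := by
  classical
  -- choose for each outcome k a maximizing index
  have hex : ∀ k : Fin n, ∃ μ, μ ∈ (Finset.univ : Finset (Fin N)) ∧
      Finset.univ.sup' hμne (fun μ => (γ μ * E k).trace.re) = (γ μ * E k).trace.re :=
    fun k => Finset.exists_mem_eq_sup' hμne _
  choose f hf1 hf2 using hex
  refine ⟨f, ?_, ?_, ?_⟩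
  · intro μ
    refine Finset.sum_induction _ _ (fun a b ha hb => ha.add hb) ?_ (fun k _ => hE k)
    simpa using (Matrix.PosSemidef.zero (n := Fin d) (R := ℂ))
  · rw [← hEsum]
    exact Finset.sum_fiberwise _ f E
  · congr 1
    -- rewrite each inner sup as a sum of pointwise sups
    have key : ∀ μ : Fin N,
        Finset.univ.sup' hμne
          (fun ν => ((γ ν) * ∑ k ∈ Finset.univ.filter (fun k => f k = μ), E k).trace.re)
        = ∑ k ∈ Finset.univ.filter (fun k => f k = μ), (γ (f k) * E k).trace.re := by
      intro μ
      have hrw : ∀ ν : Fin N,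
          ((γ ν) * ∑ k ∈ Finset.univ.filter (fun k => f k = μ), E k).trace.re
          = ∑ k ∈ Finset.univ.filter (fun k => f k = μ), (γ ν * E k).trace.re := by
        intro ν
        rw [Finset.mul_sum, Matrix.trace_sum, Complex.re_sum]
      apply le_antisymm
      · apply Finset.sup'_le
        intro ν _
        rw [hrw ν]
        apply Finset.sum_le_sum
        intro k _
        rw [← hf2 k]
        exact Finset.le_sup' (fun μ => (γ μ * E k).trace.re) (Finset.mem_univ ν)
      · rw [Finset.le_sup'_iff]
        refine ⟨μ, Finset.mem_univ μ, ?_⟩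
        rw [hrw μ]
        apply le_of_eq
        apply Finset.sum_congr rfl
        intro k hk
        have : f k = μ := (Finset.mem_filter.mp hk).2
        rw [this]
      done
    calc ∑ μ, Finset.univ.sup' hμne
          (fun ν => ((γ ν) * ∑ k ∈ Finset.univ.filter (fun k => f k = μ), E k).trace.re)
        = ∑ μ, ∑ k ∈ Finset.univ.filter (fun k => f k = μ), (γ (f k) * E k).trace.re := by
          exact Finset.sum_congr rfl fun μ _ => key μ
      _ = ∑ k, (γ (f k) * E k).trace.re := Finset.sum_fiberwise _ f _
      _ = ∑ k, Finset.univ.sup' hμne (fun μ => (γ μ * E k).trace.re) := by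
          exact Finset.sum_congr rfl fun k _ => (hf2 k).symm
end

section
/- Let (ψ_μ)_{μ=1}^N be a complete orthonormal product basis of H = ⊗_r H^(r) and suppose E = ⊗_r E^(r) is a positive semi-definite product operator of full rank that is not proportional to the identity, with E ψ_μ = f_μ ψ_μ for all μ. Then there is a subsystem s such that E^(s) is not proportional to the identity, and a measurement of the observable E^(s) (i.e., the projective measurement onto the eigenspaces of E^(s)) leaves every ψ_μ invariant and partitions {ψ_1, ..., ψ_N} into at least two non-empty subsets, each spanning a subspace of H in which it is an orthonormal product basis. -/
open Matrix
open scoped ComplexOrder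

/-- If a complete orthonormal product basis `(ψ_μ)` consists of eigenvectors of a full-rank
positive semi-definite product operator `E = ⊗_r E^(r)` which is not proportional to the
identity, then there is a subsystem `s` with `E^(s)` not proportional to the identity such that
every local factor `ω_μ^(s)` is an eigenvector of the observable `E^(s)` (so its projective
measurement leaves every `ψ_μ` invariant) and the eigenvalues split the basis into at least
two non-empty subsets. -/
theorem stmt_13 (m N : ℕ) (dim : Fin m → ℕ) (hdim : ∀ r, 0 < dim r)
    (E : ∀ r, Matrix (Fin (dim r)) (Fin (dim r)) ℂ)
    (hE : ∀ r, (E r).PosSemidef)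
    (Eprod : Matrix (∀ r, Fin (dim r)) (∀ r, Fin (dim r)) ℂ)
    (hEprod : ∀ i j, Eprod i j = ∏ r, E r (i r) (j r))
    (hfull : IsUnit Eprod)
    (hnotid : ¬∃ c : ℂ, Eprod = c • (1 : Matrix (∀ r, Fin (dim r)) (∀ r, Fin (dim r)) ℂ))
    (ω : Fin N → ∀ r, (Fin (dim r) → ℂ))
    (ψ : Fin N → ((∀ r, Fin (dim r)) → ℂ))
    (hψ : ∀ μ i, ψ μ i = ∏ r, ω μ r (i r))
    (hon : ∀ μ ν, star (ψ ν) ⬝ᵥ ψ μ = if ν = μ then 1 else 0)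
    (hcomplete : ∑ μ, Matrix.vecMulVec (ψ μ) (star (ψ μ)) = 1)
    (f : Fin N → ℝ)
    (heig : ∀ μ, Eprod *ᵥ ψ μ = (f μ : ℂ) • ψ μ) :
    ∃ s : Fin m,
      (¬∃ c : ℂ, E s = c • (1 : Matrix (Fin (dim s)) (Fin (dim s)) ℂ)) ∧
      ∃ lam : Fin N → ℝ,
        (∀ μ, E s *ᵥ ω μ s = (lam μ : ℂ) • ω μ s) ∧
        ∃ μ ν : Fin N, lam μ ≠ lam ν := by
  classical
  -- each ψ μ is nonzero
  have hψne : ∀ μ, ψ μ ≠ 0 := by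
    intro μ h
    have h1 := hon μ μ
    rw [h] at h1
    simp at h1
  -- key tensor computation
  have hkey : ∀ μ i, (Eprod *ᵥ ψ μ) i = ∏ r, (E r *ᵥ ω μ r) (i r) := by
    intro μ i
    calc (Eprod *ᵥ ψ μ) i = ∑ j : (∀ r, Fin (dim r)), (∏ r, E r (i r) (j r)) * ∏ r, ω μ r (j r) := by
          simp only [mulVec, dotProduct, hEprod, hψ]
      _ = ∑ j : (∀ r, Fin (dim r)), ∏ r, (E r (i r) (j r) * ω μ r (j r)) := by
          simp [Finset.prod_mul_distrib]
      _ = ∏ r, ∑ x, E r (i r) x * ω μ r x := by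
          rw [Finset.prod_univ_sum (fun r => (Finset.univ : Finset (Fin (dim r))))
            (fun r x => E r (i r) x * ω μ r x), Fintype.piFinset_univ]
      _ = ∏ r, (E r *ᵥ ω μ r) (i r) := rfl
  -- each local factor is nonzero
  have hωne : ∀ μ r, ω μ r ≠ 0 := by
    intro μ r h
    apply hψne μ
    funext i
    rw [hψ]
    exact Finset.prod_eq_zero (Finset.mem_univ r) (by rw [h]; rfl)
  -- eigenvalues are nonzero
  have hfne : ∀ μ, (f μ : ℂ) ≠ 0 := by
    intro μ h0
    apply hψne μ
    have h := heig μ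
    rw [h0, zero_smul] at h
    obtain ⟨u, hu⟩ := hfull
    have h2 : ψ μ = ((↑u⁻¹ : Matrix (∀ r, Fin (dim r)) (∀ r, Fin (dim r)) ℂ) * Eprod) *ᵥ ψ μ := by
      rw [← hu, Units.inv_mul, one_mulVec]
    rw [← Matrix.mulVec_mulVec, h, Matrix.mulVec_zero] at h2
    exact h2
  -- each ω μ s is an eigenvector of E s
  have hexa : ∀ μ s, ∃ a : ℂ, E s *ᵥ ω μ s = a • ω μ s := by
    intro μ s
    have hj : ∀ r, ∃ x, ω μ r x ≠ 0 := by
      intro r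
      by_contra hc
      push_neg at hc
      exact hωne μ r (funext fun x => hc x)
    choose j hjne using hj
    set P := ∏ r ∈ Finset.univ \ {s}, (E r *ᵥ ω μ r) (j r) with hP
    set Q := ∏ r ∈ Finset.univ \ {s}, ω μ r (j r) with hQ
    have hQne : Q ≠ 0 := Finset.prod_ne_zero_iff.mpr (fun r _ => hjne r)
    have split : ∀ (x : Fin (dim s)) (g : ∀ r, Fin (dim r) → ℂ),
        ∏ r, g r (Function.update j s x r)
          = g s x * ∏ r ∈ Finset.univ \ {s}, g r (j r) := by
      intro x g
      rw [Finset.prod_eq_mul_prod_sdiff_singleton_of_mem (Finset.mem_univ s)]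
      congr 1
      · rw [Function.update_self]
      · refine Finset.prod_congr rfl fun r hr => ?_
        rw [Function.update_of_ne (by simpa using (Finset.mem_sdiff.mp hr).2)]
    have hmain : ∀ x : Fin (dim s),
        (E s *ᵥ ω μ s) x * P = (f μ : ℂ) * (ω μ s x * Q) := by
      intro x
      have h1 := hkey μ (Function.update j s x)
      rw [heig μ] at h1
      have h2 : (((f μ : ℂ) • ψ μ) (Function.update j s x))
          = (f μ : ℂ) * (ω μ s x * Q) := by
        rw [Pi.smul_apply, smul_eq_mul, hψ, split x (fun r => ω μ r)]
      have h3 : (∏ r, (E r *ᵥ ω μ r) (Function.update j s x r))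
          = (E s *ᵥ ω μ s) x * P := split x (fun r => E r *ᵥ ω μ r)
      rw [h2, h3] at h1
      exact h1.symm
    have hPne : P ≠ 0 := by
      intro h0
      have h1 := hmain (j s)
      rw [h0, mul_zero] at h1
      exact (mul_ne_zero (hfne μ) (mul_ne_zero (hjne s) hQne)) h1.symm
    refine ⟨(f μ : ℂ) * Q / P, ?_⟩
    funext x
    rw [Pi.smul_apply, smul_eq_mul, div_mul_eq_mul_div, eq_div_iff hPne, hmain x]
    ring
  choose a ha using hexa
  -- the eigenvalues are real
  have haim : ∀ μ s, (a μ s).im = 0 := by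
    intro μ s
    have hnn := (hE s).dotProduct_mulVec_nonneg (ω μ s)
    rw [ha μ s, dotProduct_smul] at hnn
    set t := star (ω μ s) ⬝ᵥ ω μ s with ht
    have htnn : 0 ≤ t := dotProduct_star_self_nonneg _
    have htne : t ≠ 0 := fun h0 =>
      hωne μ s (dotProduct_star_self_eq_zero.mp h0)
    have htim : t.im = 0 := by
      rw [Complex.le_def] at htnn
      simpa using htnn.2.symm
    have htre : t.re ≠ 0 := by
      intro h0
      exact htne (Complex.ext (by simpa using h0) (by simpa using htim))
    rw [Complex.le_def] at hnn
    have h2 : (a μ s * t).im = 0 := by simpa using hnn.2.symm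
    rw [Complex.mul_im, htim, mul_zero, zero_add] at h2
    exact (mul_eq_zero.mp h2).resolve_right htre
  -- f μ equals the product of local eigenvalues
  have hf : ∀ μ, (f μ : ℂ) = ∏ r, a μ r := by
    intro μ
    have hex : ∃ i, ψ μ i ≠ 0 := by
      by_contra hc
      push_neg at hc
      exact hψne μ (funext fun i => hc i)
    obtain ⟨i, hi⟩ := hex
    have h1 := hkey μ i
    rw [heig μ] at h1
    have h2 : (∏ r, (E r *ᵥ ω μ r) (i r)) = (∏ r, a μ r) * ψ μ i := by
      rw [hψ, ← Finset.prod_mul_distrib]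
      refine Finset.prod_congr rfl fun r _ => ?_
      rw [ha μ r]; rfl
    rw [h2] at h1
    exact mul_right_cancel₀ hi h1
  -- there must be a site where eigenvalues differ
  have hdiff : ∃ s μ ν, a μ s ≠ a ν s := by
    by_contra hcon
    push_neg at hcon
    apply hnotid
    rcases Nat.eq_zero_or_pos N with hN0 | hN0
    · refine ⟨0, ?_⟩
      have h10 : (1 : Matrix (∀ r, Fin (dim r)) (∀ r, Fin (dim r)) ℂ) = 0 := by
        rw [← hcomplete]
        subst hN0
        simp
      calc Eprod = Eprod * 1 := (mul_one _).symm
        _ = 0 := by rw [h10, mul_zero]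
        _ = (0 : ℂ) • 1 := by simp
    · set μ0 : Fin N := ⟨0, hN0⟩
      have hfc : ∀ μ, (f μ : ℂ) = (f μ0 : ℂ) := by
        intro μ
        rw [hf μ, hf μ0]
        exact Finset.prod_congr rfl fun r _ => hcon r μ μ0
      have hmul : ∀ v w : (∀ r, Fin (dim r)) → ℂ,
          Eprod * vecMulVec v w = vecMulVec (Eprod *ᵥ v) w := by
        intro v w
        ext i k
        simp [Matrix.mul_apply, vecMulVec_apply, mulVec, dotProduct,
          Finset.sum_mul, mul_assoc]
      refine ⟨(f μ0 : ℂ), ?_⟩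
      calc Eprod = Eprod * 1 := (mul_one _).symm
        _ = ∑ μ, Eprod * vecMulVec (ψ μ) (star (ψ μ)) := by
            rw [← hcomplete, Finset.mul_sum]
        _ = ∑ μ, vecMulVec ((f μ : ℂ) • ψ μ) (star (ψ μ)) := by
            refine Finset.sum_congr rfl fun μ _ => ?_
            rw [hmul, heig]
        _ = (f μ0 : ℂ) • ∑ μ, vecMulVec (ψ μ) (star (ψ μ)) := by
            rw [Finset.smul_sum]
            refine Finset.sum_congr rfl fun μ _ => ?_
            ext i k
            rw [vecMulVec_apply, Matrix.smul_apply, vecMulVec_apply,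
              Pi.smul_apply, smul_eq_mul, smul_eq_mul, hfc μ]
            ring
        _ = (f μ0 : ℂ) • 1 := by rw [hcomplete]
  obtain ⟨s, μ0, ν0, hne⟩ := hdiff
  -- eigenvalue uniqueness at site s
  have huniq : ∀ μ (c : ℂ), E s *ᵥ ω μ s = c • ω μ s → a μ s = c := by
    intro μ c hc
    have h1 : (a μ s - c) • ω μ s = 0 := by
      rw [sub_smul, ← ha μ s, hc, sub_self]
    rcases smul_eq_zero.mp h1 with h2 | h2
    · linear_combination h2
    · exact absurd h2 (hωne μ s)
  refine ⟨s, ?_, fun μ => (a μ s).re, ?_, μ0, ν0, ?_⟩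
  · rintro ⟨c, hc⟩
    apply hne
    have h1 : ∀ μ, a μ s = c := by
      intro μ
      refine huniq μ c ?_
      rw [hc, Matrix.smul_mulVec, one_mulVec]
    rw [h1 μ0, h1 ν0]
  · intro μ
    have h1 : ((a μ s).re : ℂ) = a μ s := Complex.ext rfl (by simp [haim])
    rw [h1]
    exact ha μ s
  · intro h
    apply hne
    exact Complex.ext (by simpa using h) (by rw [haim, haim])
end

section
/- For the two-qubit states ψ_1 = |00⟩, ψ_2 ∝ 2|01⟩ - (√3+1)|10⟩ - √6·3^{1/4}|11⟩, ψ_3 ∝ 2|01⟩ - (√3-1)|10⟩ + √2·3^{1/4}|11⟩, the orthogonal complement of span{ψ_1, ψ_2, ψ_3} in ℂ²⊗ℂ² is one-dimensional and spanned by an entangled vector (a vector that is not a product vector ξ⊗η). -/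
/-- The orthogonal complement of the span of the three two-qubit states
`ψ_1 = |00⟩`, `ψ_2 ∝ 2|01⟩ - (√3+1)|10⟩ - √6·3^{1/4}|11⟩`,
`ψ_3 ∝ 2|01⟩ - (√3-1)|10⟩ + √2·3^{1/4}|11⟩` is one-dimensional and spanned by an
entangled vector, i.e. one whose 2×2 coefficient matrix has nonzero determinant
(basis order `|00⟩, |01⟩, |10⟩, |11⟩`). -/
theorem stmt_15
    (ψ₁ ψ₂ ψ₃ : EuclideanSpace ℂ (Fin 4))
    (hψ₁ : ψ₁ = (WithLp.equiv 2 (Fin 4 → ℂ)).symm ![1, 0, 0, 0])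
    (hψ₂ : ψ₂ = (‖(WithLp.equiv 2 (Fin 4 → ℂ)).symm
        ![0, 2, -((Real.sqrt 3 + 1 : ℝ) : ℂ),
          -(((Real.sqrt 6 * (3 : ℝ) ^ ((1 : ℝ)/4) : ℝ)) : ℂ)]‖⁻¹ : ℂ) •
      (WithLp.equiv 2 (Fin 4 → ℂ)).symm
        ![0, 2, -((Real.sqrt 3 + 1 : ℝ) : ℂ),
          -(((Real.sqrt 6 * (3 : ℝ) ^ ((1 : ℝ)/4) : ℝ)) : ℂ)])
    (hψ₃ : ψ₃ = (‖(WithLp.equiv 2 (Fin 4 → ℂ)).symm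
        ![0, 2, -((Real.sqrt 3 - 1 : ℝ) : ℂ),
          (((Real.sqrt 2 * (3 : ℝ) ^ ((1 : ℝ)/4) : ℝ)) : ℂ)]‖⁻¹ : ℂ) •
      (WithLp.equiv 2 (Fin 4 → ℂ)).symm
        ![0, 2, -((Real.sqrt 3 - 1 : ℝ) : ℂ),
          (((Real.sqrt 2 * (3 : ℝ) ^ ((1 : ℝ)/4) : ℝ)) : ℂ)]) :
    ∃ v : EuclideanSpace ℂ (Fin 4),
      (Submodule.span ℂ ({ψ₁, ψ₂, ψ₃} : Set (EuclideanSpace ℂ (Fin 4))))ᗮ =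
        Submodule.span ℂ ({v} : Set (EuclideanSpace ℂ (Fin 4))) ∧
      Matrix.det !![v 0, v 1; v 2, v 3] ≠ 0 := by
  classical
  set r : ℝ := (3 : ℝ) ^ ((1 : ℝ)/4) with hrdef
  set a : ℂ := (Real.sqrt 2 : ℂ) with hadef
  set b : ℂ := (Real.sqrt 3 : ℂ) with hbdef
  set t : ℂ := (r : ℂ) with htdef
  have h2 : a ^ 2 = 2 := by
    rw [hadef]; norm_cast; rw [Real.sq_sqrt] <;> norm_num
  have h3 : b ^ 2 = 3 := by
    rw [hbdef]; norm_cast; rw [Real.sq_sqrt] <;> norm_num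
  have h6 : (Real.sqrt 6 : ℂ) = a * b := by
    rw [hadef, hbdef]; norm_cast
    rw [← Real.sqrt_mul (by norm_num)]; norm_num
  have ht2 : t ^ 2 = b := by
    rw [htdef, hbdef]
    have : r ^ 2 = Real.sqrt 3 := by
      rw [hrdef, ← Real.rpow_natCast ((3:ℝ) ^ ((1:ℝ)/4)) 2,
        ← Real.rpow_mul (by norm_num : (0:ℝ) ≤ 3), Real.sqrt_eq_rpow]
      norm_num
    norm_cast
  -- the orthogonal vector
  set v : EuclideanSpace ℂ (Fin 4) :=
    (WithLp.equiv 2 (Fin 4 → ℂ)).symm ![0, -(2 * a * t), -((a * b + a) * t), 2] with hvdef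
  -- unnormalized vectors
  set u₂ : EuclideanSpace ℂ (Fin 4) :=
    (WithLp.equiv 2 (Fin 4 → ℂ)).symm
      ![0, 2, -((Real.sqrt 3 + 1 : ℝ) : ℂ), -(((Real.sqrt 6 * r : ℝ)) : ℂ)] with hu2def
  set u₃ : EuclideanSpace ℂ (Fin 4) :=
    (WithLp.equiv 2 (Fin 4 → ℂ)).symm
      ![0, 2, -((Real.sqrt 3 - 1 : ℝ) : ℂ), (((Real.sqrt 2 * r : ℝ)) : ℂ)] with hu3def
  have hu2ne : u₂ ≠ 0 := by
    intro h
    have := congrArg (fun f => f 1) h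
    simp [hu2def] at this
  have hu3ne : u₃ ≠ 0 := by
    intro h
    have := congrArg (fun f => f 1) h
    simp [hu3def] at this
  have hc2 : (‖u₂‖⁻¹ : ℂ) ≠ 0 := by
    simp [norm_eq_zero, hu2ne]
  have hc3 : (‖u₃‖⁻¹ : ℂ) ≠ 0 := by
    simp [norm_eq_zero, hu3ne]
  -- inner products of the unnormalized vectors with v vanish
  have hi1 : (inner ℂ ψ₁ v : ℂ) = 0 := by
    rw [hψ₁]
    simp [hvdef, PiLp.inner_apply, Fin.sum_univ_four, RCLike.inner_apply,
      WithLp.equiv_symm_apply, PiLp.toLp_apply]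
  have hi2 : (inner ℂ ψ₂ v : ℂ) = 0 := by
    rw [hψ₂, inner_smul_left]
    have : (inner ℂ u₂ v : ℂ) = 0 := by
      simp only [hu2def, hvdef, PiLp.inner_apply, Fin.sum_univ_four, RCLike.inner_apply,
        WithLp.equiv_symm_apply, PiLp.toLp_apply, Matrix.cons_val_zero, Matrix.cons_val_one,
        Matrix.head_cons, Matrix.cons_val_two, Matrix.tail_cons, Matrix.cons_val_three,
        map_neg, Complex.conj_ofReal, map_ofNat]
      push_cast
      rw [h6]
      ring_nf
      linear_combination (a*t)*h3
    rw [hu2def] at this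
    exact mul_eq_zero_of_right _ this
  have hi3 : (inner ℂ ψ₃ v : ℂ) = 0 := by
    rw [hψ₃, inner_smul_left]
    have : (inner ℂ u₃ v : ℂ) = 0 := by
      simp only [hu3def, hvdef, PiLp.inner_apply, Fin.sum_univ_four, RCLike.inner_apply,
        WithLp.equiv_symm_apply, PiLp.toLp_apply, Matrix.cons_val_zero, Matrix.cons_val_one,
        Matrix.head_cons, Matrix.cons_val_two, Matrix.tail_cons, Matrix.cons_val_three,
        map_neg, Complex.conj_ofReal, map_ofNat]
      push_cast
      rw [hadef]
      ring_nf
      linear_combination (a*t)*h3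
    rw [hu3def] at this
    exact mul_eq_zero_of_right _ this
  refine ⟨v, le_antisymm ?_ ?_, ?_⟩
  · -- Wᗮ ≤ span {v}
    intro x hx
    rw [Submodule.mem_orthogonal] at hx
    have e1 : (inner ℂ ψ₁ x : ℂ) = 0 := hx ψ₁ (Submodule.subset_span (by simp))
    have e2 : (inner ℂ ψ₂ x : ℂ) = 0 := hx ψ₂ (Submodule.subset_span (by simp))
    have e3 : (inner ℂ ψ₃ x : ℂ) = 0 := hx ψ₃ (Submodule.subset_span (by simp))
    rw [hψ₁] at e1
    rw [hψ₂, inner_smul_left, mul_eq_zero] at e2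
    rw [hψ₃, inner_smul_left, mul_eq_zero] at e3
    replace e2 : (inner ℂ u₂ x : ℂ) = 0 := by
      rcases e2 with h | h
      · exact absurd h (by simpa using hc2)
      · rw [hu2def]; exact h
    replace e3 : (inner ℂ u₃ x : ℂ) = 0 := by
      rcases e3 with h | h
      · exact absurd h (by simpa using hc3)
      · rw [hu3def]; exact h
    simp only [PiLp.inner_apply, Fin.sum_univ_four, RCLike.inner_apply,
      WithLp.equiv_symm_apply, PiLp.toLp_apply, Matrix.cons_val_zero, Matrix.cons_val_one,
      Matrix.head_cons, Matrix.cons_val_two, Matrix.tail_cons, Matrix.cons_val_three,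
      map_neg, map_zero, Complex.conj_ofReal, map_ofNat, map_one, one_mul, zero_mul, mul_zero,
      add_zero, zero_add, hu2def, hu3def] at e1 e2 e3
    have E1 : x 0 = 0 := by linear_combination e1
    have E2 : 2 * x 1 - (b + 1) * x 2 - a * b * t * x 3 = 0 := by
      push_cast at e2
      rw [h6] at e2
      linear_combination e2
    have E3 : 2 * x 1 - (b - 1) * x 2 + a * t * x 3 = 0 := by
      push_cast at e3
      rw [← hadef] at e3
      linear_combination e3
    rw [Submodule.mem_span_singleton]
    refine ⟨x 3 / 2, ?_⟩
    ext i
    fin_cases i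
    · show ((x 3 / 2 : ℂ) • v) 0 = x 0
      simp [hvdef, E1]
    · show ((x 3 / 2 : ℂ) • v) 1 = x 1
      simp only [hvdef, PiLp.smul_apply, WithLp.equiv_symm_apply, PiLp.toLp_apply, smul_eq_mul,
        Matrix.cons_val_one, Matrix.head_cons, Matrix.cons_val_zero]
      linear_combination (b - 1)/4 * E2 - (b + 1)/4 * E3 + (a * t * x 3)/4 * h3
    · show ((x 3 / 2 : ℂ) • v) 2 = x 2
      simp only [hvdef, PiLp.smul_apply, WithLp.equiv_symm_apply, PiLp.toLp_apply, smul_eq_mul,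
        Matrix.cons_val_two, Matrix.tail_cons, Matrix.head_cons]
      linear_combination (1/2 : ℂ) * E2 - (1/2 : ℂ) * E3
    · show ((x 3 / 2 : ℂ) • v) 3 = x 3
      simp only [hvdef, PiLp.smul_apply, WithLp.equiv_symm_apply, PiLp.toLp_apply, smul_eq_mul,
        Matrix.cons_val_three, Matrix.tail_cons, Matrix.head_cons]
      ring
  · -- span {v} ≤ Wᗮ
    rw [Submodule.span_le]
    intro w hw
    rw [Set.mem_singleton_iff] at hw
    subst hw
    rw [SetLike.mem_coe, Submodule.mem_orthogonal]
    intro u hu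
    induction hu using Submodule.span_induction with
    | mem y hy =>
      rcases hy with h | h | h
      · subst h; exact hi1
      · subst h; exact hi2
      · rw [Set.mem_singleton_iff] at h; subst h; exact hi3
    | zero => simp
    | add y z _ _ hy hz => rw [inner_add_left, hy, hz, add_zero]
    | smul c y _ hy => rw [inner_smul_left, hy, mul_zero]
  · -- determinant nonzero
    have hv0 : v 0 = 0 := by simp [hvdef]
    have hv1 : v 1 = -(2 * a * t) := by simp [hvdef]
    have hv2 : v 2 = -((a * b + a) * t) := by simp [hvdef]
    have hv3 : v 3 = 2 := by simp [hvdef]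
    rw [Matrix.det_fin_two_of, hv0, hv1, hv2, hv3]
    have hdet : (0 : ℂ) * 2 - -(2 * a * t) * -((a * b + a) * t) = -(4 * b + 12) := by
      linear_combination -((2 * t ^ 2 * b + 2 * t ^ 2) * h2 + (4 * b + 4) * ht2 + 4 * h3)
    rw [hdet]
    intro h
    rw [hbdef] at h
    have h' : (4 * Real.sqrt 3 + 12 : ℝ) = 0 := by
      have h'' : ((4 * Real.sqrt 3 + 12 : ℝ) : ℂ) = 0 := by
        push_cast
        linear_combination neg_eq_zero.mp h
      exact_mod_cast h''
    nlinarith [Real.sqrt_nonneg 3]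
end

section
/- For every χ with 1/2 ≤ χ ≤ 1, the two-qubit product operator Ẽ_χ = A_χ ⊗ |1⟩⟨1|, where A_χ is the 2×2 Hermitian matrix with entries ⟨0|A_χ|0⟩ = -(12√3-21)χ + 3√3 - 3, ⟨1|A_χ|1⟩ = (6√3-12)χ - 2√3 + 6, ⟨0|A_χ|1⟩ = √(2√3-3)·((5√3-3)χ - 2√3) = ⟨1|A_χ|0⟩, satisfies: (i) Ẽ_χ ≥ 0; (ii) with E_χ = Ẽ_χ / Σ_μ ⟨ψ_μ|Ẽ_χ|ψ_μ⟩, one has Σ_μ ⟨ψ_μ|E_χ|ψ_μ⟩ = 1, max_μ ⟨ψ_μ|E_χ|ψ_μ⟩ = χ, and ⟨ψ_μ|E_χ|ψ_ν⟩·⟨ψ_ν|E_χ|ψ_μ⟩-type orthogonality tr(E_χ |ψ_μ⟩⟨ψ_μ| E_χ |ψ_ν⟩⟨ψ_ν|) = |⟨ψ_ν|E_χ|ψ_μ⟩|² = 0 for μ ≠ ν. -/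
open Matrix
open scoped ComplexOrder Kronecker

lemma aux_psd_2x2 (a b d : ℝ) (ha : 0 < a) (hdet : 0 ≤ a * d - b * b) (uu vv : ℂ) :
    0 ≤ (a : ℂ) * (star uu * uu) + (b : ℂ) * (star uu * vv + star vv * uu)
      + (d : ℂ) * (star vv * vv) := by
  have h1 : 0 ≤ star ((a : ℂ) * uu + (b : ℂ) * vv) * ((a : ℂ) * uu + (b : ℂ) * vv) :=
    star_mul_self_nonneg _
  have h2 : 0 ≤ ((a * d - b * b : ℝ) : ℂ) * (star vv * vv) :=
    mul_nonneg (Complex.zero_le_real.mpr hdet) (star_mul_self_nonneg _)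
  have h3 : (a : ℂ) * ((a : ℂ) * (star uu * uu) + (b : ℂ) * (star uu * vv + star vv * uu)
      + (d : ℂ) * (star vv * vv))
      = star ((a : ℂ) * uu + (b : ℂ) * vv) * ((a : ℂ) * uu + (b : ℂ) * vv)
        + ((a * d - b * b : ℝ) : ℂ) * (star vv * vv) := by
    simp only [star_add, star_mul', Complex.star_def, Complex.conj_ofReal]
    push_cast
    ring
  have h4 : 0 ≤ (a : ℂ) * ((a : ℂ) * (star uu * uu) + (b : ℂ) * (star uu * vv + star vv * uu)
      + (d : ℂ) * (star vv * vv)) := h3 ▸ add_nonneg h1 h2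
  have h5 : ((a⁻¹ : ℝ) : ℂ) * ((a : ℂ) * ((a : ℂ) * (star uu * uu)
      + (b : ℂ) * (star uu * vv + star vv * uu) + (d : ℂ) * (star vv * vv)))
      = (a : ℂ) * (star uu * uu) + (b : ℂ) * (star uu * vv + star vv * uu)
        + (d : ℂ) * (star vv * vv) := by
    rw [← mul_assoc, ← Complex.ofReal_mul, inv_mul_cancel₀ (ne_of_gt ha),
      Complex.ofReal_one, one_mul]
  rw [← h5]
  exact mul_nonneg (Complex.zero_le_real.mpr (by positivity)) h4

lemma aux_kron_conjT (A B : Matrix (Fin 2) (Fin 2) ℂ) : (A ⊗ₖ B)ᴴ = Aᴴ ⊗ₖ Bᴴ := by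
  ext ⟨i, j⟩ ⟨k, l⟩
  simp [Matrix.conjTranspose_apply, Matrix.kroneckerMap_apply]

set_option maxHeartbeats 2000000 in
/-- For `1/2 ≤ χ ≤ 1`, the product operator `Ẽ_χ = A_χ ⊗ |1⟩⟨1|` is positive semi-definite and
its normalization `E_χ` satisfies `∑_μ ⟨ψ_μ|E_χ|ψ_μ⟩ = 1`, `max_μ ⟨ψ_μ|E_χ|ψ_μ⟩ = χ`, and
`⟨ψ_ν|E_χ|ψ_μ⟩ = 0` for `μ ≠ ν` (so `tr(E_χ|ψ_μ⟩⟨ψ_μ|E_χ|ψ_ν⟩⟨ψ_ν|) = 0`). -/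
theorem stmt_16 (χ : ℝ) (hχ : 1/2 ≤ χ ∧ χ ≤ 1)
    (u : Fin 3 → (Fin 2 × Fin 2 → ℂ))
    (hu1 : u 0 = fun p => ![![1, 0], ![0, 0]] p.1 p.2)
    (hu2 : u 1 = fun p => ![![0, 2],
      ![-((Real.sqrt 3 + 1 : ℝ) : ℂ),
        -(((Real.sqrt 6 * (3 : ℝ) ^ ((1 : ℝ)/4) : ℝ)) : ℂ)]] p.1 p.2)
    (hu3 : u 2 = fun p => ![![0, 2],
      ![-((Real.sqrt 3 - 1 : ℝ) : ℂ),
        (((Real.sqrt 2 * (3 : ℝ) ^ ((1 : ℝ)/4) : ℝ)) : ℂ)]] p.1 p.2)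
    (ψ : Fin 3 → (Fin 2 × Fin 2 → ℂ))
    (hψ : ∀ μ, ψ μ = ((Real.sqrt ((star (u μ) ⬝ᵥ u μ).re))⁻¹ : ℂ) • u μ)
    (A : Matrix (Fin 2) (Fin 2) ℂ)
    (hA : A = !![((-(12 * Real.sqrt 3 - 21) * χ + 3 * Real.sqrt 3 - 3 : ℝ) : ℂ),
        ((Real.sqrt (2 * Real.sqrt 3 - 3) * ((5 * Real.sqrt 3 - 3) * χ - 2 * Real.sqrt 3) : ℝ) : ℂ);
        ((Real.sqrt (2 * Real.sqrt 3 - 3) * ((5 * Real.sqrt 3 - 3) * χ - 2 * Real.sqrt 3) : ℝ) : ℂ),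
        (((6 * Real.sqrt 3 - 12) * χ - 2 * Real.sqrt 3 + 6 : ℝ) : ℂ)])
    (Et : Matrix (Fin 2 × Fin 2) (Fin 2 × Fin 2) ℂ)
    (hEt : Et = A ⊗ₖ !![0, 0; 0, 1])
    (s : ℂ) (hs : s = ∑ μ, star (ψ μ) ⬝ᵥ (Et *ᵥ ψ μ))
    (Eχ : Matrix (Fin 2 × Fin 2) (Fin 2 × Fin 2) ℂ)
    (hEχ : Eχ = s⁻¹ • Et) :
    Et.PosSemidef ∧
    (∑ μ, star (ψ μ) ⬝ᵥ (Eχ *ᵥ ψ μ)) = 1 ∧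
    (Finset.univ.sup' (Finset.univ_nonempty_iff.mpr ⟨(0 : Fin 3)⟩)
      (fun μ => (star (ψ μ) ⬝ᵥ (Eχ *ᵥ ψ μ)).re)) = χ ∧
    (∀ μ ν, μ ≠ ν → star (ψ ν) ⬝ᵥ (Eχ *ᵥ ψ μ) = 0) := by
  obtain ⟨hχl, hχr⟩ := hχ
  -- real radical facts
  have hs3nn : (0:ℝ) ≤ Real.sqrt 3 := Real.sqrt_nonneg 3
  have hs3 : Real.sqrt 3 ^ 2 = 3 := Real.sq_sqrt (by norm_num)
  have hs3ub : Real.sqrt 3 ≤ 7/4 := by nlinarith [hs3, hs3nn]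
  have hs3lb : (3/2:ℝ) ≤ Real.sqrt 3 := by nlinarith [hs3, hs3nn, hs3ub]
  have ht : ((3:ℝ) ^ ((1:ℝ)/4)) ^ 2 = Real.sqrt 3 := by
    rw [← Real.rpow_natCast ((3:ℝ) ^ ((1:ℝ)/4)) 2, ← Real.rpow_mul (by norm_num),
      Real.sqrt_eq_rpow]
    norm_num
  have htnn : (0:ℝ) ≤ (3:ℝ) ^ ((1:ℝ)/4) := Real.rpow_nonneg (by norm_num) _
  set t₃ : ℝ := (3:ℝ) ^ ((1:ℝ)/4) with ht₃def
  have hwnn : (0:ℝ) ≤ Real.sqrt (2 * Real.sqrt 3 - 3) := Real.sqrt_nonneg _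
  have hw : Real.sqrt (2 * Real.sqrt 3 - 3) ^ 2 = 2 * Real.sqrt 3 - 3 :=
    Real.sq_sqrt (by linarith)
  have hq : Real.sqrt 2 ^ 2 = 2 := Real.sq_sqrt (by norm_num)
  have hqnn : (0:ℝ) ≤ Real.sqrt 2 := Real.sqrt_nonneg 2
  have hb : Real.sqrt 6 ^ 2 = 6 := Real.sq_sqrt (by norm_num)
  have hbnn : (0:ℝ) ≤ Real.sqrt 6 := Real.sqrt_nonneg 6
  have key1 : Real.sqrt 2 * t₃ * Real.sqrt (2 * Real.sqrt 3 - 3)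
      = 3 - Real.sqrt 3 := by
    rw [← Real.sqrt_sq (by positivity : (0:ℝ) ≤ Real.sqrt 2 * t₃ *
        Real.sqrt (2 * Real.sqrt 3 - 3)), ← Real.sqrt_sq (by linarith : (0:ℝ) ≤ 3 - Real.sqrt 3)]
    congr 1
    linear_combination (t₃^2 * (Real.sqrt (2 * Real.sqrt 3 - 3))^2) * hq
      + 2 * (Real.sqrt (2 * Real.sqrt 3 - 3))^2 * ht + 2 * Real.sqrt 3 * hw + 3 * hs3
  have key2 : Real.sqrt 6 * t₃ * Real.sqrt (2 * Real.sqrt 3 - 3)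
      = 3 * Real.sqrt 3 - 3 := by
    rw [← Real.sqrt_sq (by positivity : (0:ℝ) ≤ Real.sqrt 6 * t₃ *
        Real.sqrt (2 * Real.sqrt 3 - 3)), ← Real.sqrt_sq (by linarith : (0:ℝ) ≤ 3 * Real.sqrt 3 - 3)]
    congr 1
    linear_combination (t₃^2 * (Real.sqrt (2 * Real.sqrt 3 - 3))^2) * hb
      + 6 * (Real.sqrt (2 * Real.sqrt 3 - 3))^2 * ht + 6 * Real.sqrt 3 * hw + 3 * hs3
  have kbq : Real.sqrt 6 * Real.sqrt 2 = 2 * Real.sqrt 3 := by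
    rw [← Real.sqrt_mul (by norm_num : (0:ℝ) ≤ 6) 2,
      show (6*2:ℝ) = 4*3 by norm_num, Real.sqrt_mul (by norm_num : (0:ℝ) ≤ 4) 3,
      show (4:ℝ) = 2^2 by norm_num, Real.sqrt_sq (by norm_num : (0:ℝ) ≤ 2)]
  -- complex versions
  have c3 : ((Real.sqrt 3 : ℝ) : ℂ) ^ 2 = 3 := by exact_mod_cast congrArg Complex.ofReal hs3
  have ct : ((t₃ : ℝ) : ℂ) ^ 2 = ((Real.sqrt 3 : ℝ) : ℂ) := by
    exact_mod_cast congrArg Complex.ofReal ht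
  have cw : ((Real.sqrt (2 * Real.sqrt 3 - 3) : ℝ) : ℂ) ^ 2
      = 2 * ((Real.sqrt 3 : ℝ) : ℂ) - 3 := by exact_mod_cast congrArg Complex.ofReal hw
  have cq : ((Real.sqrt 2 : ℝ) : ℂ) ^ 2 = 2 := by exact_mod_cast congrArg Complex.ofReal hq
  have cb : ((Real.sqrt 6 : ℝ) : ℂ) ^ 2 = 6 := by exact_mod_cast congrArg Complex.ofReal hb
  have ck1 : ((Real.sqrt 2 : ℝ) : ℂ) * ((t₃ : ℝ) : ℂ)
      * ((Real.sqrt (2 * Real.sqrt 3 - 3) : ℝ) : ℂ) = 3 - ((Real.sqrt 3 : ℝ) : ℂ) := by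
    exact_mod_cast congrArg Complex.ofReal key1
  have ck2 : ((Real.sqrt 6 : ℝ) : ℂ) * ((t₃ : ℝ) : ℂ)
      * ((Real.sqrt (2 * Real.sqrt 3 - 3) : ℝ) : ℂ) = 3 * ((Real.sqrt 3 : ℝ) : ℂ) - 3 := by
    exact_mod_cast congrArg Complex.ofReal key2
  have ckbq : ((Real.sqrt 6 : ℝ) : ℂ) * ((Real.sqrt 2 : ℝ) : ℂ)
      = 2 * ((Real.sqrt 3 : ℝ) : ℂ) := by
    exact_mod_cast congrArg Complex.ofReal kbq
  -- the nine unnormalized matrix elements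
  have hQ00 : star (u 0) ⬝ᵥ (Et *ᵥ u 0) = 0 := by
    simp [hEt, hA, hu1, Matrix.mulVec, dotProduct, Fintype.sum_prod_type,
      Fin.sum_univ_succ, Matrix.kroneckerMap_apply]
  have hQ01 : star (u 0) ⬝ᵥ (Et *ᵥ u 1) = 0 := by
    simp [hEt, hA, hu1, hu2, Matrix.mulVec, dotProduct, Fintype.sum_prod_type,
      Fin.sum_univ_succ, Matrix.kroneckerMap_apply]
  have hQ02 : star (u 0) ⬝ᵥ (Et *ᵥ u 2) = 0 := by
    simp [hEt, hA, hu1, hu3, Matrix.mulVec, dotProduct, Fintype.sum_prod_type,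
      Fin.sum_univ_succ, Matrix.kroneckerMap_apply]
  have hQ10 : star (u 1) ⬝ᵥ (Et *ᵥ u 0) = 0 := by
    simp [hEt, hA, hu1, hu2, Matrix.mulVec, dotProduct, Fintype.sum_prod_type,
      Fin.sum_univ_succ, Matrix.kroneckerMap_apply]
  have hQ20 : star (u 2) ⬝ᵥ (Et *ᵥ u 0) = 0 := by
    simp [hEt, hA, hu1, hu3, Matrix.mulVec, dotProduct, Fintype.sum_prod_type,
      Fin.sum_univ_succ, Matrix.kroneckerMap_apply]
  have hQ11 : star (u 1) ⬝ᵥ (Et *ᵥ u 1)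
      = ((24 * (Real.sqrt 3 + 1) * (1 - χ) : ℝ) : ℂ) := by
    simp only [hEt, hA, hu2, Matrix.mulVec, dotProduct, Fintype.sum_prod_type,
      Fin.sum_univ_succ, Finset.univ_unique, Finset.sum_singleton, Fin.default_eq_zero,
      Matrix.kroneckerMap_apply, Pi.star_apply]
    simp [Complex.conj_ofReal, map_ofNat]
    linear_combination (12*(χ:ℂ) + 8*((Real.sqrt 3:ℝ):ℂ) - 20*((Real.sqrt 3:ℝ):ℂ)*(χ:ℂ)) * ck2
      + (6*((Real.sqrt 6:ℝ):ℂ)^2 - 12*((Real.sqrt 6:ℝ):ℂ)^2*(χ:ℂ)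
        - 2*((Real.sqrt 3:ℝ):ℂ)*((Real.sqrt 6:ℝ):ℂ)^2
        + 6*((Real.sqrt 3:ℝ):ℂ)*((Real.sqrt 6:ℝ):ℂ)^2*(χ:ℂ)) * ct
      + (6*((Real.sqrt 3:ℝ):ℂ) - 12*((Real.sqrt 3:ℝ):ℂ)*(χ:ℂ) - 2*((Real.sqrt 3:ℝ):ℂ)^2
        + 6*((Real.sqrt 3:ℝ):ℂ)^2*(χ:ℂ)) * cb
      + (12 - 24*(χ:ℂ)) * c3
  have hQ22 : star (u 2) ⬝ᵥ (Et *ᵥ u 2) = ((24 * χ : ℝ) : ℂ) := by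
    simp only [hEt, hA, hu3, Matrix.mulVec, dotProduct, Fintype.sum_prod_type,
      Fin.sum_univ_succ, Finset.univ_unique, Finset.sum_singleton, Fin.default_eq_zero,
      Matrix.kroneckerMap_apply, Pi.star_apply]
    simp [Complex.conj_ofReal, map_ofNat]
    linear_combination (-12*(χ:ℂ) - 8*((Real.sqrt 3:ℝ):ℂ) + 20*((Real.sqrt 3:ℝ):ℂ)*(χ:ℂ)) * ck1
      + (6*((Real.sqrt 2:ℝ):ℂ)^2 - 12*((Real.sqrt 2:ℝ):ℂ)^2*(χ:ℂ)
        - 2*((Real.sqrt 3:ℝ):ℂ)*((Real.sqrt 2:ℝ):ℂ)^2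
        + 6*((Real.sqrt 3:ℝ):ℂ)*((Real.sqrt 2:ℝ):ℂ)^2*(χ:ℂ)) * ct
      + (6*((Real.sqrt 3:ℝ):ℂ) - 12*((Real.sqrt 3:ℝ):ℂ)*(χ:ℂ) - 2*((Real.sqrt 3:ℝ):ℂ)^2
        + 6*((Real.sqrt 3:ℝ):ℂ)^2*(χ:ℂ)) * cq
      + (4 - 8*(χ:ℂ)) * c3
  have hQ12 : star (u 1) ⬝ᵥ (Et *ᵥ u 2) = 0 := by
    simp only [hEt, hA, hu2, hu3, Matrix.mulVec, dotProduct, Fintype.sum_prod_type,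
      Fin.sum_univ_succ, Finset.univ_unique, Finset.sum_singleton, Fin.default_eq_zero,
      Matrix.kroneckerMap_apply, Pi.star_apply]
    simp [Complex.conj_ofReal, map_ofNat]
    linear_combination (-6*(χ:ℂ) - 4*((Real.sqrt 3:ℝ):ℂ) + 10*((Real.sqrt 3:ℝ):ℂ)*(χ:ℂ)) * ck1
      + (6*(χ:ℂ) + 4*((Real.sqrt 3:ℝ):ℂ) - 10*((Real.sqrt 3:ℝ):ℂ)*(χ:ℂ)) * ck2
      + (-6*((t₃:ℝ):ℂ)^2 + 12*((t₃:ℝ):ℂ)^2*(χ:ℂ)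
        + 2*((Real.sqrt 3:ℝ):ℂ)*((t₃:ℝ):ℂ)^2
        - 6*((Real.sqrt 3:ℝ):ℂ)*((t₃:ℝ):ℂ)^2*(χ:ℂ)) * ckbq
      + (-12*((Real.sqrt 3:ℝ):ℂ) + 24*((Real.sqrt 3:ℝ):ℂ)*(χ:ℂ) + 4*((Real.sqrt 3:ℝ):ℂ)^2
        - 12*((Real.sqrt 3:ℝ):ℂ)^2*(χ:ℂ)) * ct
      + (4 - 16*(χ:ℂ) + 4*((Real.sqrt 3:ℝ):ℂ) - 12*((Real.sqrt 3:ℝ):ℂ)*(χ:ℂ)) * c3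
  have hQ21 : star (u 2) ⬝ᵥ (Et *ᵥ u 1) = 0 := by
    simp only [hEt, hA, hu2, hu3, Matrix.mulVec, dotProduct, Fintype.sum_prod_type,
      Fin.sum_univ_succ, Finset.univ_unique, Finset.sum_singleton, Fin.default_eq_zero,
      Matrix.kroneckerMap_apply, Pi.star_apply]
    simp [Complex.conj_ofReal, map_ofNat]
    linear_combination (-6*(χ:ℂ) - 4*((Real.sqrt 3:ℝ):ℂ) + 10*((Real.sqrt 3:ℝ):ℂ)*(χ:ℂ)) * ck1
      + (6*(χ:ℂ) + 4*((Real.sqrt 3:ℝ):ℂ) - 10*((Real.sqrt 3:ℝ):ℂ)*(χ:ℂ)) * ck2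
      + (-6*((t₃:ℝ):ℂ)^2 + 12*((t₃:ℝ):ℂ)^2*(χ:ℂ)
        + 2*((Real.sqrt 3:ℝ):ℂ)*((t₃:ℝ):ℂ)^2
        - 6*((Real.sqrt 3:ℝ):ℂ)*((t₃:ℝ):ℂ)^2*(χ:ℂ)) * ckbq
      + (-12*((Real.sqrt 3:ℝ):ℂ) + 24*((Real.sqrt 3:ℝ):ℂ)*(χ:ℂ) + 4*((Real.sqrt 3:ℝ):ℂ)^2
        - 12*((Real.sqrt 3:ℝ):ℂ)^2*(χ:ℂ)) * ct
      + (4 - 16*(χ:ℂ) + 4*((Real.sqrt 3:ℝ):ℂ) - 12*((Real.sqrt 3:ℝ):ℂ)*(χ:ℂ)) * c3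
  -- norms
  have hn2 : star (u 1) ⬝ᵥ u 1 = ((8 + 8 * Real.sqrt 3 : ℝ) : ℂ) := by
    simp [hu2, dotProduct, Fintype.sum_prod_type, Fin.sum_univ_succ,
      Complex.conj_ofReal, map_ofNat]
    linear_combination c3 + ((Real.sqrt 6:ℝ):ℂ)^2 * ct + ((Real.sqrt 3:ℝ):ℂ) * cb
  have hn3 : star (u 2) ⬝ᵥ u 2 = ((8 : ℝ) : ℂ) := by
    simp [hu3, dotProduct, Fintype.sum_prod_type, Fin.sum_univ_succ,
      Complex.conj_ofReal, map_ofNat]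
    linear_combination c3 + ((Real.sqrt 2:ℝ):ℂ)^2 * ct + ((Real.sqrt 3:ℝ):ℂ) * cq
  have hre2 : (star (u 1) ⬝ᵥ u 1).re = 8 + 8 * Real.sqrt 3 := by rw [hn2]; simp
  have hre3 : (star (u 2) ⬝ᵥ u 2).re = (8 : ℝ) := by rw [hn3]; simp
  -- generic reduction lemmas
  have keyQ : ∀ μ ν, star (ψ μ) ⬝ᵥ (Et *ᵥ ψ ν)
      = (((Real.sqrt ((star (u μ) ⬝ᵥ u μ).re))⁻¹ : ℝ) : ℂ)
        * (((Real.sqrt ((star (u ν) ⬝ᵥ u ν).re))⁻¹ : ℝ) : ℂ)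
        * (star (u μ) ⬝ᵥ (Et *ᵥ u ν)) := by
    intro μ ν
    rw [hψ μ, hψ ν, Matrix.mulVec_smul, star_smul, smul_dotProduct, dotProduct_smul]
    simp [Complex.conj_ofReal, smul_eq_mul]
    ring
  have keyP : ∀ μ ν, star (ψ μ) ⬝ᵥ (Eχ *ᵥ ψ ν)
      = s⁻¹ * ((((Real.sqrt ((star (u μ) ⬝ᵥ u μ).re))⁻¹ : ℝ) : ℂ)
        * (((Real.sqrt ((star (u ν) ⬝ᵥ u ν).re))⁻¹ : ℝ) : ℂ)
        * (star (u μ) ⬝ᵥ (Et *ᵥ u ν))) := by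
    intro μ ν
    rw [hEχ, Matrix.smul_mulVec, dotProduct_smul, keyQ μ ν]
    simp [smul_eq_mul]
  -- normalization arithmetic
  have h8 : (0:ℝ) < 8 + 8 * Real.sqrt 3 := by linarith
  have hcc2 : (Real.sqrt (8 + 8 * Real.sqrt 3))⁻¹ * (Real.sqrt (8 + 8 * Real.sqrt 3))⁻¹
      * (24 * (Real.sqrt 3 + 1) * (1 - χ)) = 3 * (1 - χ) := by
    rw [← mul_inv, Real.mul_self_sqrt (le_of_lt h8)]
    field_simp
    ring
  have hcc3 : (Real.sqrt 8)⁻¹ * (Real.sqrt 8)⁻¹ * (24 * χ) = 3 * χ := by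
    rw [← mul_inv, Real.mul_self_sqrt (by norm_num : (0:ℝ) ≤ 8)]
    ring
  -- value of s
  have hsval : s = 3 := by
    rw [hs, Fin.sum_univ_three, keyQ 0 0, keyQ 1 1, keyQ 2 2, hQ00, hQ11, hQ22, hre2, hre3]
    have e2 := congrArg (Complex.ofReal) hcc2
    have e3 := congrArg (Complex.ofReal) hcc3
    push_cast at e2 e3 ⊢
    linear_combination e2 + e3
  -- diagonal values of the normalized operator
  have hT0 : star (ψ 0) ⬝ᵥ (Eχ *ᵥ ψ 0) = 0 := by
    rw [keyP 0 0, hQ00]; ring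
  have hT1 : star (ψ 1) ⬝ᵥ (Eχ *ᵥ ψ 1) = 1 - (χ : ℂ) := by
    rw [keyP 1 1, hQ11, hre2, hsval]
    have e2 := congrArg (Complex.ofReal) hcc2
    push_cast at e2 ⊢
    linear_combination (3:ℂ)⁻¹ * e2
  have hT2 : star (ψ 2) ⬝ᵥ (Eχ *ᵥ ψ 2) = (χ : ℂ) := by
    rw [keyP 2 2, hQ22, hre3, hsval]
    have e3 := congrArg (Complex.ofReal) hcc3
    push_cast at e3 ⊢
    linear_combination (3:ℂ)⁻¹ * e3
  refine ⟨?_, ?_, ?_, ?_⟩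
  · -- positive semidefiniteness
    rw [Matrix.posSemidef_iff_dotProduct_mulVec]
    constructor
    · show Etᴴ = Et
      have hAH : Aᴴ = A := by
        rw [hA]
        ext i j
        fin_cases i <;> fin_cases j <;> simp [Complex.conj_ofReal]
      have hBH : (!![0, 0; 0, 1] : Matrix (Fin 2) (Fin 2) ℂ)ᴴ = !![0, 0; 0, 1] := by
        ext i j
        fin_cases i <;> fin_cases j <;> simp
      rw [hEt, aux_kron_conjT, hAH, hBH]
    · intro x
      have expand : star x ⬝ᵥ (Et *ᵥ x)
          = ((-(12 * Real.sqrt 3 - 21) * χ + 3 * Real.sqrt 3 - 3 : ℝ) : ℂ)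
              * (star (x (0,1)) * x (0,1))
            + ((Real.sqrt (2 * Real.sqrt 3 - 3) * ((5 * Real.sqrt 3 - 3) * χ
                - 2 * Real.sqrt 3) : ℝ) : ℂ)
              * (star (x (0,1)) * x (1,1) + star (x (1,1)) * x (0,1))
            + (((6 * Real.sqrt 3 - 12) * χ - 2 * Real.sqrt 3 + 6 : ℝ) : ℂ)
              * (star (x (1,1)) * x (1,1)) := by
        rw [hEt, hA]
        simp [Matrix.mulVec, dotProduct, Fintype.sum_prod_type, Fin.sum_univ_succ,
          Matrix.kroneckerMap_apply]
        ring
      rw [expand]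
      apply aux_psd_2x2
      · have h21 : (0:ℝ) ≤ (21 - 12 * Real.sqrt 3) * χ :=
          mul_nonneg (by linarith) (by linarith)
        nlinarith [h21, hs3lb]
      · have hdet : (-(12 * Real.sqrt 3 - 21) * χ + 3 * Real.sqrt 3 - 3)
            * ((6 * Real.sqrt 3 - 12) * χ - 2 * Real.sqrt 3 + 6)
            - (Real.sqrt (2 * Real.sqrt 3 - 3) * ((5 * Real.sqrt 3 - 3) * χ - 2 * Real.sqrt 3))
              * (Real.sqrt (2 * Real.sqrt 3 - 3) * ((5 * Real.sqrt 3 - 3) * χ - 2 * Real.sqrt 3))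
            = (36 - 12 * Real.sqrt 3) * (χ * (1 - χ)) := by
          linear_combination (-9*χ^2 - 12*Real.sqrt 3*χ + 30*Real.sqrt 3*χ^2
              - 4*Real.sqrt 3^2 + 20*Real.sqrt 3^2*χ - 25*Real.sqrt 3^2*χ^2) * hw
            + (6 - 42*χ + 63*χ^2 - 8*Real.sqrt 3 + 40*Real.sqrt 3*χ - 50*Real.sqrt 3*χ^2) * hs3
        rw [hdet]
        exact mul_nonneg (by linarith) (mul_nonneg (by linarith) (by linarith))
  · -- sum equals one
    rw [Fin.sum_univ_three, hT0, hT1, hT2]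
    ring
  · -- the maximum is χ
    refine le_antisymm (Finset.sup'_le _ _ ?_) ?_
    · intro μ _
      fin_cases μ
      · show (star (ψ 0) ⬝ᵥ (Eχ *ᵥ ψ 0)).re ≤ χ
        rw [hT0]; simp; linarith
      · show (star (ψ 1) ⬝ᵥ (Eχ *ᵥ ψ 1)).re ≤ χ
        rw [hT1]; simp [Complex.sub_re]; linarith
      · show (star (ψ 2) ⬝ᵥ (Eχ *ᵥ ψ 2)).re ≤ χ
        rw [hT2]; simp
    · have h := Finset.le_sup' (fun μ => (star (ψ μ) ⬝ᵥ (Eχ *ᵥ ψ μ)).re)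
        (Finset.mem_univ (2 : Fin 3))
      rw [hT2] at h
      exact h
  · -- off-diagonal vanishing
    intro μ ν hne
    fin_cases μ <;> fin_cases ν
    · exact absurd rfl hne
    · show star (ψ 1) ⬝ᵥ (Eχ *ᵥ ψ 0) = 0
      rw [keyP 1 0, hQ10]; ring
    · show star (ψ 2) ⬝ᵥ (Eχ *ᵥ ψ 0) = 0
      rw [keyP 2 0, hQ20]; ring
    · show star (ψ 0) ⬝ᵥ (Eχ *ᵥ ψ 1) = 0
      rw [keyP 0 1, hQ01]; ring
    · exact absurd rfl hne
    · show star (ψ 2) ⬝ᵥ (Eχ *ᵥ ψ 1) = 0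
      rw [keyP 2 1, hQ21]; ring
    · show star (ψ 0) ⬝ᵥ (Eχ *ᵥ ψ 2) = 0
      rw [keyP 0 2, hQ02]; ring
    · show star (ψ 1) ⬝ᵥ (Eχ *ᵥ ψ 2) = 0
      rw [keyP 1 2, hQ12]; ring
    · exact absurd rfl hne
end

section
/- For every χ with 1/3 ≤ χ < 1/2, the diagonal 2×2 matrices B_χ = diag(20χ + 2χ̃ - 4, (12-√3)χ + χ̃ + √3 - 1) and C_χ = diag(-(4+3√3)χ - χ̃ + 3√3 + 5, (12-√3)χ + χ̃ + √3 - 1), with χ̃ = √((115-8√3)χ² - (46-10√3)χ - 2√3 + 4), are positive semi-definite (so Ẽ_χ = B_χ ⊗ C_χ ≥ 0), and the argument of the square root defining χ̃ is non-negative on this interval. -/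
open Matrix
open scoped ComplexOrder Kronecker

/-- For `1/3 ≤ χ < 1/2`, the argument of the square root defining `χ̃` is non-negative, the
diagonal matrices `B_χ` and `C_χ` are positive semi-definite, and so is `Ẽ_χ = B_χ ⊗ C_χ`. -/
theorem stmt_17 (χ : ℝ) (hχ : 1/3 ≤ χ ∧ χ < 1/2)
    (χt : ℝ)
    (hχt : χt = Real.sqrt ((115 - 8 * Real.sqrt 3) * χ^2
      - (46 - 10 * Real.sqrt 3) * χ - 2 * Real.sqrt 3 + 4))
    (B C : Matrix (Fin 2) (Fin 2) ℂ)
    (hB : B = Matrix.diagonal ![((20 * χ + 2 * χt - 4 : ℝ) : ℂ),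
      (((12 - Real.sqrt 3) * χ + χt + Real.sqrt 3 - 1 : ℝ) : ℂ)])
    (hC : C = Matrix.diagonal ![((-(4 + 3 * Real.sqrt 3) * χ - χt + 3 * Real.sqrt 3 + 5 : ℝ) : ℂ),
      (((12 - Real.sqrt 3) * χ + χt + Real.sqrt 3 - 1 : ℝ) : ℂ)]) :
    0 ≤ (115 - 8 * Real.sqrt 3) * χ^2 - (46 - 10 * Real.sqrt 3) * χ - 2 * Real.sqrt 3 + 4 ∧
    0 ≤ 20 * χ + 2 * χt - 4 ∧
    0 ≤ (12 - Real.sqrt 3) * χ + χt + Real.sqrt 3 - 1 ∧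
    0 ≤ -(4 + 3 * Real.sqrt 3) * χ - χt + 3 * Real.sqrt 3 + 5 ∧
    B.PosSemidef ∧ C.PosSemidef ∧ (B ⊗ₖ C).PosSemidef := by
  obtain ⟨h1, h2⟩ := hχ
  set s := Real.sqrt 3 with hs
  have hs2 : s ^ 2 = 3 := Real.sq_sqrt (by norm_num)
  have hsl : 1.7 ≤ s := by
    nlinarith [Real.sqrt_nonneg 3]
  have hsu : s ≤ 1.8 := by
    nlinarith [Real.sqrt_nonneg 3]
  have harg : 0 ≤ (115 - 8 * s) * χ^2 - (46 - 10 * s) * χ - 2 * s + 4 := by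
    nlinarith [sq_nonneg (χ - 1/3), sq_nonneg (χ - 1/2), sq_nonneg (s - 1.7)]
  have hχt0 : 0 ≤ χt := hχt ▸ Real.sqrt_nonneg _
  have hχt2 : χt ^ 2 = (115 - 8 * s) * χ^2 - (46 - 10 * s) * χ - 2 * s + 4 := by
    rw [hχt, Real.sq_sqrt harg]
  have hb1 : 0 ≤ 20 * χ + 2 * χt - 4 := by nlinarith
  have hb2 : 0 ≤ (12 - s) * χ + χt + s - 1 := by nlinarith
  have hc1 : 0 ≤ -(4 + 3 * s) * χ - χt + 3 * s + 5 := by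
    nlinarith [sq_nonneg (χ - 1/3), sq_nonneg (χ - 1/2), sq_nonneg (s - 1.7), hχt2,
      mul_nonneg hχt0 (sub_nonneg.2 h1)]
  have hBp : B.PosSemidef := by
    rw [hB, Matrix.posSemidef_diagonal_iff]
    intro i
    fin_cases i
    · simpa only [Fin.mk_zero, Fin.isValue, Matrix.cons_val_zero] using Complex.zero_le_real.2 hb1
    · simpa only [Fin.mk_one, Fin.isValue, Matrix.cons_val_one, Matrix.head_cons, Matrix.cons_val_zero] using Complex.zero_le_real.2 hb2
  have hCp : C.PosSemidef := by
    rw [hC, Matrix.posSemidef_diagonal_iff]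
    intro i
    fin_cases i
    · simpa only [Fin.mk_zero, Fin.isValue, Matrix.cons_val_zero] using Complex.zero_le_real.2 hc1
    · simpa only [Fin.mk_one, Fin.isValue, Matrix.cons_val_one, Matrix.head_cons, Matrix.cons_val_zero] using Complex.zero_le_real.2 hb2
  refine ⟨harg, hb1, hb2, hc1, hBp, hCp, ?_⟩
  rw [hB, hC, Matrix.kroneckerMap_diagonal_diagonal _ (by simp) (by simp),
    Matrix.posSemidef_diagonal_iff]
  rintro ⟨i, j⟩
  fin_cases i <;> fin_cases j <;>
    simp only [Fin.mk_zero, Fin.mk_one, Fin.isValue, Matrix.cons_val_zero, Matrix.cons_val_one,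
      Matrix.head_cons, ← Complex.ofReal_mul] <;>
    exact Complex.zero_le_real.2 (by positivity)
end
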